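/- arXiv:1702.07274 — 3 statements merged into one kernel-verified Lean document; each statement's English description precedes it below -/
import Mathlib

section
/- For the Rotting Bandits problem with K arms and non-increasing positive expected reward sequences μ_i(n), the greedy policy π^max that at each time step pulls an arm maximizing μ_i(N_i(t)+1) (where N_i(t) is the number of prior pulls of arm i) maximizes the expected total reward J(T;π) = ∑_{t=1}^T μ_{π(t)}(N_{π(t)}(t)+1) over all policies π, for every horizon T. -/
open Finset

/-- number of pulls of arm `i` by policy `π` strictly before time `t` -/
def pullCount {K : ℕ} (π : ℕ → Fin K) (i : Fin K) (t : ℕ) : ℕ :=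
  ((Finset.range t).filter (fun s => π s = i)).card

/-- expected total reward of policy `π` over horizon `T`:
`J(T;π) = ∑_{t=0}^{T-1} μ_{π(t)}(N_{π(t)}(t)+1)` -/
def totalReward {K : ℕ} (μ : Fin K → ℕ → ℝ) (π : ℕ → Fin K) (T : ℕ) : ℝ :=
  ∑ t ∈ Finset.range T, μ (π t) (pullCount π (π t) t + 1)

/-- `π` is greedy: at each time it pulls an arm maximizing the next expected reward -/
def IsGreedy {K : ℕ} (μ : Fin K → ℕ → ℝ) (π : ℕ → Fin K) : Prop :=
  ∀ t : ℕ, ∀ i : Fin K, μ i (pullCount π i t + 1) ≤ μ (π t) (pullCount π (π t) t + 1)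

/-- reward as a function of pull-count profile -/
def countReward {K : ℕ} (μ : Fin K → ℕ → ℝ) (c : Fin K → ℕ) : ℝ :=
  ∑ i, ∑ n ∈ Finset.range (c i), μ i (n + 1)

lemma pullCount_succ {K : ℕ} (π : ℕ → Fin K) (i : Fin K) (t : ℕ) :
    pullCount π i (t + 1) = pullCount π i t + (if π t = i then 1 else 0) := by
  unfold pullCount
  rw [Finset.range_add_one, Finset.filter_insert]
  split
  · rw [Finset.card_insert_of_notMem (by simp)]
  · simp

lemma sum_pullCount {K : ℕ} (π : ℕ → Fin K) (T : ℕ) :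
    ∑ i, pullCount π i T = T := by
  unfold pullCount
  conv_rhs => rw [← Finset.card_range T]
  exact (Finset.card_eq_sum_card_fiberwise (fun x _ => Finset.mem_univ (π x))).symm

lemma totalReward_eq_countReward {K : ℕ} (μ : Fin K → ℕ → ℝ) (π : ℕ → Fin K) (T : ℕ) :
    totalReward μ π T = countReward μ (fun i => pullCount π i T) := by
  induction T with
  | zero => simp [totalReward, countReward, pullCount]
  | succ T ih =>
    rw [totalReward, Finset.sum_range_succ, ← totalReward, ih]
    unfold countReward
    have h : ∀ i : Fin K, ∑ n ∈ Finset.range (pullCount π i (T + 1)), μ i (n + 1)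
        = (∑ n ∈ Finset.range (pullCount π i T), μ i (n + 1))
          + if π T = i then μ i (pullCount π i T + 1) else 0 := by
      intro i
      rw [pullCount_succ]
      split <;> simp [Finset.sum_range_succ]
    rw [Finset.sum_congr rfl (fun i _ => h i), Finset.sum_add_distrib]
    simp

lemma countReward_le {K : ℕ} (μ : Fin K → ℕ → ℝ)
    (hanti : ∀ i, Antitone (μ i))
    (πmax : ℕ → Fin K) (hgreedy : IsGreedy μ πmax) :
    ∀ (T : ℕ) (c : Fin K → ℕ), (∑ i, c i = T) →
      countReward μ c ≤ totalReward μ πmax T := by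
  intro T
  induction T with
  | zero =>
    intro c hc
    have : ∀ i, c i = 0 := by
      intro i
      exact Finset.sum_eq_zero_iff.mp hc i (Finset.mem_univ i)
    simp [countReward, totalReward, this]
  | succ T ih =>
    intro c hc
    set g : ℝ := μ (πmax T) (pullCount πmax (πmax T) T + 1) with hg
    -- find an arm j with c j > 0 and μ j (c j) ≤ g
    have hex : ∃ j : Fin K, c j ≠ 0 ∧ μ j (c j) ≤ g := by
      by_contra hcon
      push_neg at hcon
      have hle : ∀ j : Fin K, c j ≤ pullCount πmax j T := by
        intro j
        by_contra hj
        push_neg at hj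
        have hj0 : c j ≠ 0 := by omega
        have h1 : pullCount πmax j T + 1 ≤ c j := hj
        have h2 : μ j (c j) ≤ μ j (pullCount πmax j T + 1) := hanti j h1
        have h3 : μ j (pullCount πmax j T + 1) ≤ g := hgreedy T j
        exact absurd (le_trans h2 h3) (not_le.mpr (hcon j hj0))
      have : (T + 1 : ℕ) ≤ T := by
        calc (T + 1 : ℕ) = ∑ i, c i := hc.symm
        _ ≤ ∑ i, pullCount πmax i T := Finset.sum_le_sum (fun i _ => hle i)
        _ = T := sum_pullCount πmax T
      omega
    obtain ⟨j, hj0, hjle⟩ := hex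
    set c' : Fin K → ℕ := Function.update c j (c j - 1) with hc'
    have hsum' : ∑ i, c' i = T := by
      rw [hc', Finset.sum_update_of_mem (Finset.mem_univ j),
          show Finset.univ \ {j} = Finset.univ.erase j from (Finset.erase_eq _ _).symm]
      have h := Finset.add_sum_erase Finset.univ c (Finset.mem_univ j)
      omega
    have hsplit : countReward μ c = countReward μ c' + μ j (c j) := by
      unfold countReward
      rw [← Finset.sum_erase_add _ _ (Finset.mem_univ j),
          ← Finset.sum_erase_add _ _ (Finset.mem_univ j)]
      have h1 : ∀ i ∈ Finset.univ.erase j,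
          (∑ n ∈ Finset.range (c i), μ i (n + 1))
            = ∑ n ∈ Finset.range (c' i), μ i (n + 1) := by
        intro i hi
        rw [hc', Function.update_of_ne (Finset.ne_of_mem_erase hi)]
      rw [Finset.sum_congr rfl h1]
      have h2 : (∑ n ∈ Finset.range (c j), μ j (n + 1))
          = (∑ n ∈ Finset.range (c' j), μ j (n + 1)) + μ j (c j) := by
        have hcj : c j = (c j - 1) + 1 := by omega
        rw [hc', Function.update_self]
        conv_lhs => rw [hcj]
        rw [Finset.sum_range_succ, ← hcj]
      rw [h2]
      ring
    have hT1 : totalReward μ πmax (T + 1) = totalReward μ πmax T + g := by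
      rw [totalReward, Finset.sum_range_succ, ← totalReward, hg]
    rw [hsplit, hT1]
    exact add_le_add (ih c' hsum') hjle

/-- For the Rotting Bandits problem with non-increasing positive expected reward
sequences, the greedy policy `π^max` maximizes the expected total reward over all
policies, for every horizon `T`. -/
theorem greedy_policy_optimal {K : ℕ}
    (μ : Fin K → ℕ → ℝ)
    (hpos : ∀ i n, 0 < μ i n)
    (hanti : ∀ i, Antitone (μ i))
    (πmax : ℕ → Fin K) (hgreedy : IsGreedy μ πmax) :
    ∀ (T : ℕ) (π : ℕ → Fin K), totalReward μ π T ≤ totalReward μ πmax T := by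
  intro T π
  rw [totalReward_eq_countReward μ π T]
  exact countReward_le μ hanti πmax hgreedy T (fun i => pullCount π i T)
    (sum_pullCount π T)
end

section
/- Let 0.01 ≤ θ₁ < θ₂ ≤ 0.49. Then there exist a constant c̄ > 0 and N ∈ ℕ such that for all n ≥ N, n·σ²/(∑_{j=1}^n j^{−θ₁} − ∑_{j=1}^n j^{−θ₂})² ≤ c̄/n^{1−2θ₁}. -/
open Real Finset

/-- For `0.01 ≤ θ₁ < θ₂ ≤ 0.49`, the detection difficulty
`det_{θ₁,θ₂}(n) = nσ²/(∑_{j=1}^n j^{−θ₁} − ∑_{j=1}^n j^{−θ₂})²` is eventually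
bounded by `c̄/n^{1−2θ₁}` for some constant `c̄ > 0`. -/
theorem det_difficulty_eventual_bound (θ₁ θ₂ σ : ℝ)
    (h₁ : 0.01 ≤ θ₁) (h₁₂ : θ₁ < θ₂) (h₂ : θ₂ ≤ 0.49) (hσ : 0 < σ) :
    ∃ c : ℝ, 0 < c ∧ ∃ N : ℕ, ∀ n : ℕ, N ≤ n →
      (n : ℝ) * σ ^ 2 /
          ((∑ j ∈ Finset.Icc 1 n, (j : ℝ) ^ (-θ₁)) -
            (∑ j ∈ Finset.Icc 1 n, (j : ℝ) ^ (-θ₂))) ^ 2 ≤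
        c / (n : ℝ) ^ (1 - 2 * θ₁) := by
  have hδ : 0 < 1 - (2:ℝ) ^ (θ₁ - θ₂) := by
    have : (2:ℝ) ^ (θ₁ - θ₂) < 1 :=
      Real.rpow_lt_one_of_one_lt_of_neg one_lt_two (by linarith)
    linarith
  set δ := 1 - (2:ℝ) ^ (θ₁ - θ₂) with hδdef
  refine ⟨4 * σ ^ 2 / δ ^ 2, by positivity, 2, ?_⟩
  intro n hn
  have hn0 : (0:ℝ) < n := by
    have : 0 < n := by omega
    exact_mod_cast this
  have hn2 : (2:ℝ) ≤ n := by exact_mod_cast hn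
  -- key lower bound on the difference of sums
  have hdiff : (δ / 2) * (n:ℝ) ^ (1 - θ₁) ≤
      (∑ j ∈ Finset.Icc 1 n, (j : ℝ) ^ (-θ₁)) -
        (∑ j ∈ Finset.Icc 1 n, (j : ℝ) ^ (-θ₂)) := by
    rw [← Finset.sum_sub_distrib]
    have hstep : ∀ j ∈ Finset.Icc 2 n,
        δ * (n:ℝ) ^ (-θ₁) ≤ (j : ℝ) ^ (-θ₁) - (j : ℝ) ^ (-θ₂) := by
      intro j hj
      simp only [Finset.mem_Icc] at hj
      have hj2 : (2:ℝ) ≤ j := by exact_mod_cast hj.1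
      have hjn : (j:ℝ) ≤ n := by exact_mod_cast hj.2
      have hj0 : (0:ℝ) < j := by linarith
      have e1 : (j:ℝ) ^ (-θ₂) = (j:ℝ) ^ (-θ₁) * (j:ℝ) ^ (θ₁ - θ₂) := by
        rw [← Real.rpow_add hj0]; ring_nf
      have e2 : (j:ℝ) ^ (θ₁ - θ₂) ≤ (2:ℝ) ^ (θ₁ - θ₂) :=
        Real.rpow_le_rpow_of_nonpos (by norm_num) hj2 (by linarith)
      have e3 : (n:ℝ) ^ (-θ₁) ≤ (j:ℝ) ^ (-θ₁) :=
        Real.rpow_le_rpow_of_nonpos hj0 hjn (by linarith)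
      have hjpos : (0:ℝ) < (j:ℝ) ^ (-θ₁) := Real.rpow_pos_of_pos hj0 _
      calc δ * (n:ℝ) ^ (-θ₁) ≤ δ * (j:ℝ) ^ (-θ₁) :=
            mul_le_mul_of_nonneg_left e3 hδ.le
        _ = (j:ℝ) ^ (-θ₁) * (1 - (2:ℝ) ^ (θ₁ - θ₂)) := by rw [hδdef]; ring
        _ ≤ (j:ℝ) ^ (-θ₁) * (1 - (j:ℝ) ^ (θ₁ - θ₂)) := by nlinarith
        _ = (j:ℝ) ^ (-θ₁) - (j:ℝ) ^ (-θ₂) := by rw [e1]; ring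
    have hsum2 : ((Finset.Icc 2 n).card : ℝ) * (δ * (n:ℝ) ^ (-θ₁)) ≤
        ∑ j ∈ Finset.Icc 2 n, ((j : ℝ) ^ (-θ₁) - (j : ℝ) ^ (-θ₂)) := by
      have := Finset.card_nsmul_le_sum (Finset.Icc 2 n)
        (fun j => (j : ℝ) ^ (-θ₁) - (j : ℝ) ^ (-θ₂)) (δ * (n:ℝ) ^ (-θ₁)) hstep
      simpa [nsmul_eq_mul] using this
    have hsubset : Finset.Icc 2 n ⊆ Finset.Icc 1 n := by
      apply Finset.Icc_subset_Icc_left; omega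
    have hnonneg : ∀ j ∈ Finset.Icc 1 n, j ∉ Finset.Icc 2 n →
        0 ≤ (j : ℝ) ^ (-θ₁) - (j : ℝ) ^ (-θ₂) := by
      intro j hj _
      simp only [Finset.mem_Icc] at hj
      have hj1 : (1:ℝ) ≤ j := by exact_mod_cast hj.1
      have : (j:ℝ) ^ (-θ₂) ≤ (j:ℝ) ^ (-θ₁) :=
        Real.rpow_le_rpow_of_exponent_le hj1 (by linarith)
      linarith
    have hmono := Finset.sum_le_sum_of_subset_of_nonneg hsubset hnonneg
    have hcard : ((Finset.Icc 2 n).card : ℝ) = (n:ℝ) - 1 := by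
      rw [Nat.card_Icc]
      have : n + 1 - 2 = n - 1 := by omega
      rw [this, Nat.cast_sub (by omega)]
      norm_num
    have hpowsplit : (n:ℝ) ^ (1 - θ₁) = (n:ℝ) * (n:ℝ) ^ (-θ₁) := by
      rw [show (1:ℝ) - θ₁ = 1 + (-θ₁) by ring, Real.rpow_add hn0, Real.rpow_one]
    have hnp : (0:ℝ) < (n:ℝ) ^ (-θ₁) := Real.rpow_pos_of_pos hn0 _
    calc (δ / 2) * (n:ℝ) ^ (1 - θ₁)
        = (δ * (n:ℝ) ^ (-θ₁)) * ((n:ℝ) / 2) := by rw [hpowsplit]; ring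
      _ ≤ (δ * (n:ℝ) ^ (-θ₁)) * ((n:ℝ) - 1) := by
          apply mul_le_mul_of_nonneg_left (by linarith) (by positivity)
      _ = ((Finset.Icc 2 n).card : ℝ) * (δ * (n:ℝ) ^ (-θ₁)) := by rw [hcard]; ring
      _ ≤ ∑ j ∈ Finset.Icc 2 n, ((j : ℝ) ^ (-θ₁) - (j : ℝ) ^ (-θ₂)) := hsum2
      _ ≤ ∑ j ∈ Finset.Icc 1 n, ((j : ℝ) ^ (-θ₁) - (j : ℝ) ^ (-θ₂)) := hmono
  set D := (∑ j ∈ Finset.Icc 1 n, (j : ℝ) ^ (-θ₁)) -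
      (∑ j ∈ Finset.Icc 1 n, (j : ℝ) ^ (-θ₂)) with hD
  have hlow : 0 < (δ / 2) * (n:ℝ) ^ (1 - θ₁) := by
    have := Real.rpow_pos_of_pos hn0 (1 - θ₁)
    positivity
  have hDpos : 0 < D := lt_of_lt_of_le hlow hdiff
  have hpow : (0:ℝ) < (n:ℝ) ^ (1 - 2 * θ₁) := Real.rpow_pos_of_pos hn0 _
  rw [div_le_div_iff₀ (by positivity) hpow]
  have key : (n:ℝ) * (n:ℝ) ^ (1 - 2 * θ₁) = ((n:ℝ) ^ (1 - θ₁)) ^ 2 := by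
    rw [sq, ← Real.rpow_add hn0]
    nth_rewrite 1 [show (n:ℝ) = (n:ℝ) ^ (1:ℝ) from (Real.rpow_one _).symm]
    rw [← Real.rpow_add hn0]
    ring_nf
  have hD2 : ((δ / 2) * (n:ℝ) ^ (1 - θ₁)) ^ 2 ≤ D ^ 2 := by
    apply pow_le_pow_left₀ hlow.le hdiff
  have hpn : (0:ℝ) < (n:ℝ) ^ (1 - θ₁) := Real.rpow_pos_of_pos hn0 _
  have expand : ((δ / 2) * (n:ℝ) ^ (1 - θ₁)) ^ 2
      = δ ^ 2 / 4 * ((n:ℝ) ^ (1 - θ₁)) ^ 2 := by ring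
  rw [expand] at hD2
  calc (n:ℝ) * σ ^ 2 * (n:ℝ) ^ (1 - 2 * θ₁)
      = σ ^ 2 * ((n:ℝ) * (n:ℝ) ^ (1 - 2 * θ₁)) := by ring
    _ = σ ^ 2 * ((n:ℝ) ^ (1 - θ₁)) ^ 2 := by rw [key]
    _ = (4 * σ ^ 2 / δ ^ 2) * (δ ^ 2 / 4 * ((n:ℝ) ^ (1 - θ₁)) ^ 2) := by
        field_simp
    _ ≤ (4 * σ ^ 2 / δ ^ 2) * D ^ 2 := by
        apply mul_le_mul_of_nonneg_left hD2 (by positivity)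
end

section
/- Let 0.01 ≤ θ₁ < θ₂ ≤ 0.49 and σ > 0. Define D(θ, n) = ∑_{j=1}^{⌊n/2⌋} j^{−θ} − ∑_{j=⌊n/2⌋+1}^{n} j^{−θ}. Then there exist c̃ > 0 and N such that for all n ≥ N, nσ²/(D(θ₁,n) − D(θ₂,n))² ≤ c̃/n^{1−2θ₁}; consequently for every ε > 0 there exists a finite D(ε) with nσ²/(D(θ₁,n) − D(θ₂,n))² ≤ ε for all n ≥ D(ε). -/
open Real Finset

/-- Halved-difference statistic for the power-law model:
`D(θ,n) = ∑_{j=1}^{⌊n/2⌋} j^{−θ} − ∑_{j=⌊n/2⌋+1}^n j^{−θ}`. -/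
noncomputable def halfDiff (θ : ℝ) (n : ℕ) : ℝ :=
  (∑ j ∈ Finset.Icc 1 (n / 2), (j : ℝ) ^ (-θ)) -
    ∑ j ∈ Finset.Icc (n / 2 + 1) n, (j : ℝ) ^ (-θ)

lemma aux_anti (θ : ℝ) (hθ : 0 ≤ θ) (x₀ : ℝ) (hx₀ : 0 < x₀) (a : ℕ) :
    AntitoneOn (fun x : ℝ => x ^ (-θ)) (Set.Icc x₀ (x₀ + a)) :=
  fun x hx _ _ hxy => Real.rpow_le_rpow_of_nonpos (lt_of_lt_of_le hx₀ hx.1) hxy (neg_nonpos.mpr hθ)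

lemma S_lower (θ : ℝ) (hθ0 : 0 ≤ θ) (hθ1 : θ < 1) (k : ℕ) :
    (((k:ℝ)+1) ^ (1-θ) - 1) / (1-θ) ≤ ∑ j ∈ Finset.Icc 1 k, (j : ℝ) ^ (-θ) := by
  have h := (aux_anti θ hθ0 1 one_pos k).integral_le_sum
  have hint : (∫ x in (1:ℝ)..(1 + k : ℝ), x ^ (-θ)) = (((k:ℝ)+1) ^ (1-θ) - 1) / (1-θ) := by
    rw [integral_rpow (Or.inl (by linarith))]
    rw [Real.one_rpow]
    ring_nf
  rw [hint] at h
  refine h.trans_eq ?_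
  rw [show Finset.Icc 1 k = Finset.Ico 1 (k+1) by rw [Finset.Ico_add_one_right_eq_Icc],
    Finset.sum_Ico_eq_sum_range]
  simp only [Nat.add_sub_cancel]
  refine Finset.sum_congr rfl fun i _ => ?_
  push_cast
  rw [add_comm]

lemma S_upper (θ : ℝ) (hθ0 : 0 ≤ θ) (hθ1 : θ < 1) (k : ℕ) (hk : 1 ≤ k) :
    ∑ j ∈ Finset.Icc 1 k, (j : ℝ) ^ (-θ) ≤ 1 + ((k:ℝ) ^ (1-θ) - 1) / (1-θ) := by
  have h := (aux_anti θ hθ0 1 one_pos (k-1)).sum_le_integral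
  have hcast : ((1:ℝ) + (k-1 : ℕ)) = (k : ℝ) := by
    have : ((k - 1 : ℕ) : ℝ) = (k:ℝ) - 1 := by push_cast [hk]; ring
    rw [this]; ring
  rw [hcast] at h
  have hint : (∫ x in (1:ℝ)..(k : ℝ), x ^ (-θ)) = ((k:ℝ) ^ (1-θ) - 1) / (1-θ) := by
    rw [integral_rpow (Or.inl (by linarith))]
    rw [Real.one_rpow]
    ring_nf
  rw [hint] at h
  have hsplit : ∑ j ∈ Finset.Icc 1 k, (j : ℝ) ^ (-θ)
      = 1 + ∑ j ∈ Finset.Icc 2 k, (j : ℝ) ^ (-θ) := by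
    have h01 : (0:ℕ) ≤ 1 := by norm_num
    have := Finset.sum_Ioc_consecutive (fun j : ℕ => (j : ℝ) ^ (-θ)) h01 hk
    rw [show Finset.Icc 1 k = Finset.Ioc 0 k from (Finset.Icc_add_one_left_eq_Ioc 0 k),
      show Finset.Icc 2 k = Finset.Ioc 1 k from (Finset.Icc_add_one_left_eq_Ioc 1 k), ← this]
    norm_num
  rw [hsplit]
  have hre : ∑ j ∈ Finset.Icc 2 k, (j : ℝ) ^ (-θ)
      = ∑ i ∈ Finset.range (k-1), ((1:ℝ) + ((i:ℕ)+1 : ℕ)) ^ (-θ) := by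
    rw [show Finset.Icc 2 k = Finset.Ico 2 (k+1) by rw [Finset.Ico_add_one_right_eq_Icc],
      Finset.sum_Ico_eq_sum_range]
    have : k + 1 - 2 = k - 1 := by omega
    rw [this]
    refine Finset.sum_congr rfl fun i _ => ?_
    push_cast
    ring_nf
  rw [hre]
  linarith

lemma halfDiff_eq (θ : ℝ) (n : ℕ) :
    halfDiff θ n = 2 * (∑ j ∈ Finset.Icc 1 (n/2), (j : ℝ) ^ (-θ))
      - ∑ j ∈ Finset.Icc 1 n, (j : ℝ) ^ (-θ) := by
  have hmn : n / 2 ≤ n := Nat.div_le_self n 2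
  have := Finset.sum_Ioc_consecutive (fun j : ℕ => (j : ℝ) ^ (-θ)) (Nat.zero_le (n/2)) hmn
  rw [show Finset.Icc 1 n = Finset.Ioc 0 n from (Finset.Icc_add_one_left_eq_Ioc 0 n), ← this,
    show Finset.Ioc 0 (n/2) = Finset.Icc 1 (n/2) from (Finset.Icc_add_one_left_eq_Ioc 0 (n/2)).symm]
  rw [halfDiff, show Finset.Icc (n/2+1) n = Finset.Ioc (n/2) n from (Finset.Icc_add_one_left_eq_Ioc (n/2) n)]
  ring

lemma hd_lower (θ : ℝ) (hθ0 : 0 ≤ θ) (hθh : θ ≤ 1/2) (n : ℕ) :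
    (2 ^ θ - 1) / (1 - θ) * (n:ℝ) ^ (1-θ) - 5 ≤ halfDiff θ n := by
  have hθ1 : θ < 1 := by linarith
  have hα : (0:ℝ) < 1 - θ := by linarith
  have hαi : 1 / (1-θ) ≤ 2 := by rw [div_le_iff₀ hα]; linarith
  rw [halfDiff_eq θ n]
  have hS1 := S_lower θ hθ0 hθ1 (n/2)
  have hS2 := S_upper θ hθ0 hθ1 n
  -- handle n = 0 separately
  rcases Nat.eq_zero_or_pos n with h0 | hn1
  · subst h0
    have he : Finset.Icc 1 0 = (∅ : Finset ℕ) := rfl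
    simp only [Nat.zero_div, Nat.cast_zero, Real.zero_rpow (by linarith : (1:ℝ)-θ ≠ 0),
      mul_zero, zero_sub, he, Finset.sum_empty]
    norm_num
  have hS2' := hS2 hn1
  -- (n/2 + 1 : ℝ) ≥ n/2
  have hm : ((n/2 : ℕ) : ℝ) + 1 ≥ (n:ℝ)/2 := by
    have : n ≤ 2 * (n/2) + 1 := by omega
    have := (Nat.cast_le (α := ℝ)).2 this
    push_cast at this
    linarith
  have hpow : ((n:ℝ)/2) ^ (1-θ) ≤ (((n/2:ℕ):ℝ) + 1) ^ (1-θ) :=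
    Real.rpow_le_rpow (by positivity) hm (le_of_lt hα)
  have hdiv : ((n:ℝ)/2) ^ (1-θ) = (n:ℝ)^(1-θ) / 2^(1-θ) :=
    Real.div_rpow (Nat.cast_nonneg n) (by norm_num : (0:ℝ) ≤ 2) (1-θ)
  have h2 : (2:ℝ)^(1-θ) = 2 / 2^θ := by
    rw [Real.rpow_sub (by norm_num), Real.rpow_one]
  have hkey : 2^θ * (n:ℝ)^(1-θ) / 2 ≤ (((n/2:ℕ):ℝ) + 1) ^ (1-θ) := by
    rw [hdiv, h2] at hpow
    have h2θ : (0:ℝ) < 2^θ := Real.rpow_pos_of_pos (by norm_num) θ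
    calc 2^θ * (n:ℝ)^(1-θ) / 2 = (n:ℝ)^(1-θ) / (2 / 2^θ) := by
          field_simp
      _ ≤ _ := hpow
  have hnθpos : (0:ℝ) ≤ (n:ℝ)^(1-θ) := Real.rpow_nonneg (Nat.cast_nonneg n) _
  set Sm := ∑ j ∈ Finset.Icc 1 (n/2), (j : ℝ) ^ (-θ) with hSm
  set Sn := ∑ j ∈ Finset.Icc 1 n, (j : ℝ) ^ (-θ) with hSn
  set P := (n:ℝ)^(1-θ) with hP
  set M := (((n/2:ℕ):ℝ)+1)^(1-θ) with hM
  have hu : (0:ℝ) < (1-θ)⁻¹ := by positivity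
  have hu2 : (1-θ)⁻¹ ≤ 2 := by
    rw [inv_le_iff_one_le_mul₀ hα]; linarith
  have h2M : 2^θ * P ≤ 2 * M := by linarith [hkey]
  have hS1' : (M - 1) * (1-θ)⁻¹ ≤ Sm := by rw [← div_eq_mul_inv]; exact hS1
  have hS2'' : Sn ≤ 1 + (P - 1) * (1-θ)⁻¹ := by rw [← div_eq_mul_inv]; exact hS2'
  rw [div_eq_mul_inv]
  nlinarith [mul_nonneg (le_of_lt hu) (by linarith : (0:ℝ) ≤ 2*M - 2^θ*P)]

lemma hd_upper (θ : ℝ) (hθ0 : 0 ≤ θ) (hθh : θ ≤ 1/2) (n : ℕ) (hn2 : 2 ≤ n) :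
    halfDiff θ n ≤ (2 ^ θ - 1) / (1 - θ) * (n:ℝ) ^ (1-θ) + 4 := by
  have hθ1 : θ < 1 := by linarith
  have hα : (0:ℝ) < 1 - θ := by linarith
  rw [halfDiff_eq θ n]
  have hm1 : 1 ≤ n / 2 := by omega
  have hS1 := S_upper θ hθ0 hθ1 (n/2) hm1
  have hS2 := S_lower θ hθ0 hθ1 n
  -- (n/2 : ℝ) ≤ n/2
  have hm : ((n/2 : ℕ) : ℝ) ≤ (n:ℝ)/2 := by
    have h' : 2 * (n/2) ≤ n := Nat.mul_div_le n 2 |>.trans_eq rfl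
    have := (Nat.cast_le (α := ℝ)).2 h'
    push_cast at this
    linarith
  have hpow : (((n/2:ℕ):ℝ)) ^ (1-θ) ≤ ((n:ℝ)/2) ^ (1-θ) :=
    Real.rpow_le_rpow (Nat.cast_nonneg _) hm (le_of_lt hα)
  have hdiv : ((n:ℝ)/2) ^ (1-θ) = (n:ℝ)^(1-θ) / 2^(1-θ) :=
    Real.div_rpow (Nat.cast_nonneg n) (by norm_num : (0:ℝ) ≤ 2) (1-θ)
  have h2 : (2:ℝ)^(1-θ) = 2 / 2^θ := by
    rw [Real.rpow_sub (by norm_num), Real.rpow_one]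
  have h2θ : (0:ℝ) < 2^θ := Real.rpow_pos_of_pos (by norm_num) θ
  have hkey : (((n/2:ℕ):ℝ)) ^ (1-θ) ≤ 2^θ * (n:ℝ)^(1-θ) / 2 := by
    rw [hdiv, h2] at hpow
    calc (((n/2:ℕ):ℝ)) ^ (1-θ) ≤ (n:ℝ)^(1-θ) / (2 / 2^θ) := hpow
      _ = 2^θ * (n:ℝ)^(1-θ) / 2 := by field_simp
  -- (n+1)^(1-θ) ≥ n^(1-θ)
  have hplus : (n:ℝ)^(1-θ) ≤ ((n:ℝ)+1)^(1-θ) :=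
    Real.rpow_le_rpow (Nat.cast_nonneg n) (by linarith) (le_of_lt hα)
  set Sm := ∑ j ∈ Finset.Icc 1 (n/2), (j : ℝ) ^ (-θ) with hSm
  set Sn := ∑ j ∈ Finset.Icc 1 n, (j : ℝ) ^ (-θ) with hSn
  set P := (n:ℝ)^(1-θ) with hP
  set M := (((n/2:ℕ):ℝ))^(1-θ) with hM
  have hu : (0:ℝ) < (1-θ)⁻¹ := by positivity
  have hu2 : (1-θ)⁻¹ ≤ 2 := by
    rw [inv_le_iff_one_le_mul₀ hα]; linarith
  have h2M : 2 * M ≤ 2^θ * P := by linarith [hkey]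
  have hS1' : Sm ≤ 1 + (M - 1) * (1-θ)⁻¹ := by rw [← div_eq_mul_inv]; exact hS1
  have hS2' : (((n:ℝ)+1)^(1-θ) - 1) * (1-θ)⁻¹ ≤ Sn := by rw [← div_eq_mul_inv]; exact hS2
  have hS2'' : (P - 1) * (1-θ)⁻¹ ≤ Sn := by
    refine le_trans ?_ hS2'
    have := mul_le_mul_of_nonneg_right (by linarith : P - 1 ≤ ((n:ℝ)+1)^(1-θ) - 1) (le_of_lt hu)
    linarith
  rw [div_eq_mul_inv]
  nlinarith [mul_nonneg (le_of_lt hu) (by linarith : (0:ℝ) ≤ 2^θ*P - 2*M)]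

/-- For `0.01 ≤ θ₁ < θ₂ ≤ 0.49` and `σ > 0`, the difference-based detection
difficulty `Ddet_{θ₁,θ₂}(n) = nσ²/(D(θ₁,n) − D(θ₂,n))²` is eventually bounded by
`c̃/n^{1−2θ₁}`; consequently, for every `ε > 0` it is eventually at most `ε`. -/
theorem Ddet_difficulty_bound (θ₁ θ₂ σ : ℝ)
    (h₁ : 0.01 ≤ θ₁) (h₁₂ : θ₁ < θ₂) (h₂ : θ₂ ≤ 0.49) (hσ : 0 < σ) :
    (∃ c : ℝ, 0 < c ∧ ∃ N : ℕ, ∀ n : ℕ, N ≤ n →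
        (n : ℝ) * σ ^ 2 / (halfDiff θ₁ n - halfDiff θ₂ n) ^ 2 ≤
          c / (n : ℝ) ^ (1 - 2 * θ₁)) ∧
      ∀ ε : ℝ, 0 < ε → ∃ N : ℕ, ∀ n : ℕ, N ≤ n →
        (n : ℝ) * σ ^ 2 / (halfDiff θ₁ n - halfDiff θ₂ n) ^ 2 ≤ ε := by
  have hθ₁0 : (0:ℝ) ≤ θ₁ := by norm_num at h₁ ⊢; linarith
  have hθ₁0' : (0:ℝ) < θ₁ := by norm_num at h₁ ⊢; linarith
  have hθ₂h : θ₂ ≤ 1/2 := by norm_num at h₂ ⊢; linarith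
  have hθ₁h : θ₁ ≤ 1/2 := by linarith
  set α₁ := 1 - θ₁ with hα₁def
  set α₂ := 1 - θ₂ with hα₂def
  have hα₁ : (0:ℝ) < α₁ := by rw [hα₁def]; linarith
  set A := (2 ^ θ₁ - 1) / α₁ with hAdef
  set B := (2 ^ θ₂ - 1) / α₂ with hBdef
  have h2θ₁ : (1:ℝ) < 2 ^ θ₁ := by
    have := Real.rpow_lt_rpow_of_exponent_lt (by norm_num : (1:ℝ) < 2) hθ₁0'
    rwa [Real.rpow_zero] at this
  have hA : 0 < A := div_pos (by linarith) hα₁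
  -- tendsto fact
  have t1 : Filter.Tendsto (fun n : ℕ => B * (n:ℝ) ^ (-(θ₂ - θ₁)) + 9 * (n:ℝ) ^ (-(1 - θ₁)))
      Filter.atTop (nhds 0) := by
    have a1 := (tendsto_rpow_neg_atTop (by linarith : (0:ℝ) < θ₂ - θ₁)).comp
      (tendsto_natCast_atTop_atTop (R := ℝ))
    have a2 := (tendsto_rpow_neg_atTop (by linarith : (0:ℝ) < 1 - θ₁)).comp
      (tendsto_natCast_atTop_atTop (R := ℝ))
    have := (a1.const_mul B).add (a2.const_mul 9)
    simpa using this
  have hev : ∀ᶠ n : ℕ in Filter.atTop,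
      B * (n:ℝ) ^ (-(θ₂ - θ₁)) + 9 * (n:ℝ) ^ (-(1 - θ₁)) < A/2 :=
    t1.eventually_lt_const (by positivity)
  obtain ⟨N₀, hN₀⟩ := Filter.eventually_atTop.1 hev
  set N := max N₀ 2 with hNdef
  -- key: for all n ≥ N, diff ≥ (A/2) n^α₁
  have key : ∀ n : ℕ, N ≤ n →
      A/2 * (n:ℝ) ^ α₁ ≤ halfDiff θ₁ n - halfDiff θ₂ n := by
    intro n hn
    have hn2 : 2 ≤ n := le_trans (le_max_right _ _) hn
    have hn0 : (0:ℝ) < (n:ℝ) := by positivity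
    have hg := hN₀ n (le_trans (le_max_left _ _) hn)
    have hl := hd_lower θ₁ hθ₁0 hθ₁h n
    have hu := hd_upper θ₂ (by linarith) hθ₂h n hn2
    have hα₁pos : (0:ℝ) < (n:ℝ) ^ α₁ := Real.rpow_pos_of_pos hn0 _
    -- multiply hg by n^α₁
    have hmul := mul_lt_mul_of_pos_right hg hα₁pos
    have e1 : (n:ℝ) ^ (-(θ₂ - θ₁)) * (n:ℝ) ^ α₁ = (n:ℝ) ^ α₂ := by
      rw [← Real.rpow_add hn0]; congr 1; rw [hα₁def, hα₂def]; ring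
    have e2 : (n:ℝ) ^ (-(1 - θ₁)) * (n:ℝ) ^ α₁ = 1 := by
      rw [← Real.rpow_add hn0, hα₁def]; norm_num
    rw [add_mul, mul_assoc, mul_assoc, e1, e2] at hmul
    -- hmul : B * n^α₂ + 9 * 1 < A/2 * n^α₁
    have : B * (n:ℝ)^α₂ + 9 < A/2 * (n:ℝ)^α₁ := by linarith
    linarith
  have main : ∀ n : ℕ, N ≤ n → (n : ℝ) * σ ^ 2 / (halfDiff θ₁ n - halfDiff θ₂ n) ^ 2 ≤
      4*σ^2/A^2 / (n : ℝ) ^ (1 - 2 * θ₁) := by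
    intro n hn
    have hn2 : 2 ≤ n := le_trans (le_max_right _ _) hn
    have hn0 : (0:ℝ) < (n:ℝ) := by positivity
    have hk := key n hn
    have hα₁pos : (0:ℝ) < (n:ℝ) ^ α₁ := Real.rpow_pos_of_pos hn0 _
    have hbpos : (0:ℝ) < A/2 * (n:ℝ)^α₁ := by positivity
    have hsq : (A/2 * (n:ℝ)^α₁)^2 ≤ (halfDiff θ₁ n - halfDiff θ₂ n)^2 :=
      pow_le_pow_left₀ (le_of_lt hbpos) hk 2
    have h1 : (n:ℝ) * σ^2 / (halfDiff θ₁ n - halfDiff θ₂ n)^2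
        ≤ (n:ℝ) * σ^2 / (A/2 * (n:ℝ)^α₁)^2 :=
      div_le_div_of_nonneg_left (by positivity) (by positivity) hsq
    refine h1.trans_eq ?_
    have e2 : (A/2*(n:ℝ)^α₁)^2 = A^2/4 * ((n:ℝ)^(1-2*θ₁) * (n:ℝ)) := by
      rw [mul_pow, ← Real.rpow_natCast ((n:ℝ)^α₁) 2, ← Real.rpow_mul hn0.le,
        show (α₁*((2:ℕ):ℝ)) = (1-2*θ₁)+1 by rw [hα₁def]; push_cast; ring,
        Real.rpow_add hn0, Real.rpow_one]
      ring
    rw [e2]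
    have hr0 : (0:ℝ) < (n:ℝ)^(1-2*θ₁) := Real.rpow_pos_of_pos hn0 _
    field_simp
  refine ⟨⟨4*σ^2/A^2, by positivity, N, main⟩, ?_⟩
  intro ε hε
  -- c / n^(1-2θ₁) → 0
  have t2 : Filter.Tendsto (fun n : ℕ => 4*σ^2/A^2 * (n:ℝ) ^ (-(1 - 2*θ₁)))
      Filter.atTop (nhds 0) := by
    have a2 := (tendsto_rpow_neg_atTop (by linarith : (0:ℝ) < 1 - 2*θ₁)).comp
      (tendsto_natCast_atTop_atTop (R := ℝ))
    simpa using a2.const_mul (4*σ^2/A^2)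
  have hev2 : ∀ᶠ n : ℕ in Filter.atTop,
      4*σ^2/A^2 * (n:ℝ) ^ (-(1 - 2*θ₁)) ≤ ε := t2.eventually_le_const hε
  obtain ⟨N₂, hN₂⟩ := Filter.eventually_atTop.1 hev2
  refine ⟨max N N₂, fun n hn => ?_⟩
  have hn2 : 2 ≤ n := le_trans (le_max_right _ _) (le_trans (le_max_left _ _) hn)
  have hn0 : (0:ℝ) < (n:ℝ) := by positivity
  have hb := hN₂ n (le_trans (le_max_right _ _) hn)
  calc (n : ℝ) * σ ^ 2 / (halfDiff θ₁ n - halfDiff θ₂ n) ^ 2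
      ≤ 4*σ^2/A^2 / (n : ℝ) ^ (1 - 2 * θ₁) := main n (le_trans (le_max_left _ _) hn)
    _ = 4*σ^2/A^2 * (n:ℝ) ^ (-(1 - 2*θ₁)) := by
        rw [Real.rpow_neg hn0.le, div_eq_mul_inv]
    _ ≤ ε := hb
end
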